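/- arXiv:nlin/0101058 — 8 statements merged into one kernel-verified Lean document; each statement's English description precedes it below -/
import Mathlib

section
/- For each j ∈ {1,...,N}, one has the functional identity ∑_{k=1}^N (1/(e^{r_j} - e^{-r_k})) · (e^{r_k} - e^{-r_k}) · ∏_{l≠k} (e^{-r_k} - e^{r_l})/(e^{-r_k} - e^{-r_l}) = 1. -/
open Finset Complex Polynomial

lemma key_identity (N : ℕ) (a b : Fin N → ℂ) (ha : Function.Injective a)
    (x : ℂ) (hx : ∀ k, x - a k ≠ 0) (hxb : ∏ l, (x - b l) = 0) :
    ∑ k, (1 / (x - a k)) * (b k - a k) *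
      ∏ l ∈ Finset.univ.erase k, (a k - b l) / (a k - a l) = 1 := by
  classical
  have hD : (∏ l, (x - a l)) ≠ 0 := prod_ne_zero_iff.mpr fun l _ => hx l
  set P : Polynomial ℂ := ∏ l, (X - C (b l)) with hP
  set Q : Polynomial ℂ := ∏ l, (X - C (a l)) with hQ
  have hPm : P.Monic := monic_prod_of_monic _ _ fun l _ => monic_X_sub_C _
  have hQm : Q.Monic := monic_prod_of_monic _ _ fun l _ => monic_X_sub_C _
  have hPd : P.degree = N := by
    rw [hP, degree_prod]
    simp [degree_X_sub_C]
  have hQd : Q.degree = N := by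
    rw [hQ, degree_prod]
    simp [degree_X_sub_C]
  have hdeg : (P - Q).degree < ((univ : Finset (Fin N)).card : ℕ) := by
    rw [card_univ, Fintype.card_fin]
    calc (P - Q).degree < P.degree := degree_sub_lt (hPd.trans hQd.symm) hPm.ne_zero
            (by rw [hPm.leadingCoeff, hQm.leadingCoeff])
    _ = N := hPd
  have hinj : Set.InjOn a (univ : Finset (Fin N)) := ha.injOn
  have h := Lagrange.eq_interpolate hinj hdeg
  have h2 := congrArg (Polynomial.eval x) h
  have hQa : ∀ i : Fin N, ∏ l, (a i - a l) = 0 := fun i =>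
    prod_eq_zero (mem_univ i) (by simp)
  have E : ∑ i, (∏ l, (a i - b l)) * ∏ l ∈ univ.erase i, ((a i - a l)⁻¹ * (x - a l))
      = -(∏ l, (x - a l)) := by
    rw [Lagrange.interpolate_apply] at h2
    simp only [Polynomial.eval_sub, Polynomial.eval_finset_sum, Polynomial.eval_mul,
      Polynomial.eval_C, Lagrange.basis, Lagrange.basisDivisor, hP, hQ,
      Polynomial.eval_prod, Polynomial.eval_sub, Polynomial.eval_X, Polynomial.eval_C,
      hxb, hQa, sub_zero, zero_sub] at h2
    exact h2.symm
  have step : ∀ k : Fin N,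
      (1 / (x - a k)) * (b k - a k) * ∏ l ∈ univ.erase k, (a k - b l) / (a k - a l)
      = -((∏ l, (a k - b l)) * ∏ l ∈ univ.erase k, ((a k - a l)⁻¹ * (x - a l)))
          / (∏ l, (x - a l)) := by
    intro k
    have h1 : ∏ l ∈ univ.erase k, (a k - b l) / (a k - a l)
        = (∏ l ∈ univ.erase k, (a k - b l)) * (∏ l ∈ univ.erase k, (a k - a l)⁻¹) := by
      simp only [div_eq_mul_inv]; rw [prod_mul_distrib]
    have h2' : ∏ l ∈ univ.erase k, ((a k - a l)⁻¹ * (x - a l))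
        = (∏ l ∈ univ.erase k, (a k - a l)⁻¹) * ∏ l ∈ univ.erase k, (x - a l) :=
      prod_mul_distrib
    have h3 : ∏ l, (a k - b l) = (a k - b k) * ∏ l ∈ univ.erase k, (a k - b l) :=
      (mul_prod_erase univ _ (mem_univ k)).symm
    have h4 : ∏ l, (x - a l) = (x - a k) * ∏ l ∈ univ.erase k, (x - a l) :=
      (mul_prod_erase univ _ (mem_univ k)).symm
    have h5 : (∏ l ∈ univ.erase k, (x - a l)) ≠ 0 :=
      prod_ne_zero_iff.mpr fun l _ => hx l
    have h6 : (∏ l ∈ univ.erase k, (a k - a l)) ≠ 0 :=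
      prod_ne_zero_iff.mpr fun l hl =>
        sub_ne_zero.mpr fun e => (mem_erase.mp hl).1 (ha e.symm)
    rw [h1, h2', h3, h4, eq_div_iff (mul_ne_zero (hx k) h5), one_div]
    have hv := inv_mul_cancel₀ (hx k)
    linear_combination ((b k - a k) * (∏ l ∈ univ.erase k, (a k - b l)) *
      (∏ l ∈ univ.erase k, (a k - a l)⁻¹) * (∏ l ∈ univ.erase k, (x - a l))) * hv
  calc ∑ k, (1 / (x - a k)) * (b k - a k) *
        ∏ l ∈ univ.erase k, (a k - b l) / (a k - a l)
      = ∑ k, -((∏ l, (a k - b l)) * ∏ l ∈ univ.erase k, ((a k - a l)⁻¹ * (x - a l)))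
          / (∏ l, (x - a l)) := sum_congr rfl fun k _ => step k
    _ = -(∑ i, (∏ l, (a i - b l)) * ∏ l ∈ univ.erase i, ((a i - a l)⁻¹ * (x - a l)))
          / (∏ l, (x - a l)) := by rw [← sum_div, ← sum_neg_distrib]
    _ = 1 := by rw [E, neg_neg, div_self hD]

theorem cauchy_row_sum_identity (N : ℕ) (r : Fin N → ℂ)
    (hr : ∀ m n, m ≠ n → exp (r m) ≠ exp (r n) ∧ exp (r m) ≠ exp (-r n))
    (hr' : ∀ k, exp (r k) ≠ exp (-r k)) :
    ∀ j, ∑ k, (1 / (exp (r j) - exp (-r k))) * (exp (r k) - exp (-r k)) *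
      ∏ l ∈ Finset.univ.erase k,
        (exp (-r k) - exp (r l)) / (exp (-r k) - exp (-r l)) = 1 := by
  intro j
  have ha : Function.Injective (fun k => exp (-r k)) := by
    intro m n h
    by_contra hmn
    have h' : exp (r m) = exp (r n) := by
      have := congrArg (·⁻¹) h
      simpa [Complex.exp_neg] using this
    exact (hr m n hmn).1 h'
  have hx : ∀ k, exp (r j) - exp (-r k) ≠ 0 := by
    intro k
    by_cases hjk : j = k
    · subst hjk; exact sub_ne_zero.mpr (hr' j)
    · exact sub_ne_zero.mpr ((hr j k hjk).2)
  have hxb : ∏ l, (exp (r j) - exp (r l)) = 0 :=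
    prod_eq_zero (mem_univ j) (by simp)
  simpa using key_identity N (fun k => exp (-r k)) (fun k => exp (r k)) ha (exp (r j)) hx hxb
end

section
/- Let C(r) be the Cauchy matrix with entries C(r)_{mn} = 1/(e^{r_m} - e^{-r_n}) and ζ = (1,...,1)^t. Then the m-th component of C(r)^{-1}ζ equals (e^{r_m} - e^{-r_m}) · ∏_{n≠m} (e^{-r_m} - e^{r_n})/(e^{-r_m} - e^{-r_n}). -/
open Finset Complex Matrix

/-!
Write `g = ∏ (X - y j)` and `w j = ∏_{n ≠ j} (y j - y n)⁻¹` for its nodal weights. The barycentric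
form of Lagrange interpolation at the nodes `y` says that the Cauchy matrix `(x i - y j)⁻¹`, applied
to the vector `w j * P (y j)`, returns `P (x i) / g (x i)` for every polynomial `P` of degree
less than `N`. As interpolation and evaluation at the `N` distinct points `x i` are injective on
such polynomials, the Cauchy matrix is invertible, and `P = g - ∏ (X - x n)` gives the preimage of
the all-ones vector. With `x = exp r` and `y = exp (-r)`, the condition on `Im r` is exactly what
keeps `e^{r_m} ≠ e^{-r_m}`.
-/

section CauchyMatrix

open Polynomial Lagrange

variable {K ι : Type*} [Field K] [Fintype ι] [DecidableEq ι]

def cauchyMatrix (x y : ι → K) : Matrix ι ι K :=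
  of fun i j => (x i - y j)⁻¹

variable {x y : ι → K}

theorem cauchyMatrix_mulVec_nodalWeight_mul (hxy : ∀ i j, x i ≠ y j) (r : ι → K) (i : ι) :
    (cauchyMatrix x y *ᵥ fun j => nodalWeight univ y j * r j) i =
      (interpolate univ y r).eval (x i) / (nodal univ y).eval (x i) := by
  have hg : (nodal univ y).eval (x i) ≠ 0 :=
    eval_nodal_not_at_node fun j _ => hxy i j
  rw [eval_interpolate_not_at_node r fun j _ => hxy i j, mul_div_cancel_left₀ _ hg]
  refine sum_congr rfl fun j _ => ?_
  simp only [cauchyMatrix, of_apply]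
  ring

theorem cauchyMatrix_mulVec_injective (hx : Function.Injective x) (hy : Function.Injective y)
    (hxy : ∀ i j, x i ≠ y j) : Function.Injective (cauchyMatrix x y).mulVec := by
  have hyinj : Set.InjOn y (univ : Finset ι) := hy.injOn
  -- every vector is `w j * r j` for `r = w⁻¹ * a`, with `w` the nonvanishing nodal weights
  let interp (a : ι → K) : K[X] := interpolate univ y fun j => (nodalWeight univ y j)⁻¹ * a j
  have hmulVec (a : ι → K) (i : ι) : (cauchyMatrix x y *ᵥ a) i =
      (interp a).eval (x i) / (nodal univ y).eval (x i) := by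
    rw [← cauchyMatrix_mulVec_nodalWeight_mul hxy]
    congr 2
    ext j
    rw [mul_inv_cancel_left₀ (nodalWeight_ne_zero hyinj (mem_univ j))]
  intro a b hab
  have hinterp : interp a = interp b := by
    refine eq_of_degrees_lt_of_eval_index_eq _ hx.injOn (degree_interpolate_lt _ hyinj)
      (degree_interpolate_lt _ hyinj) fun i _ => ?_
    have hi := congrFun hab i
    rw [hmulVec, hmulVec] at hi
    exact (div_left_inj' (eval_nodal_not_at_node fun j _ => hxy i j)).mp hi
  ext j
  have hj := values_eq_on_of_interpolate_eq _ _ hyinj hinterp j (mem_univ j)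
  exact mul_left_cancel₀ (inv_ne_zero (nodalWeight_ne_zero hyinj (mem_univ j))) hj

theorem cauchyMatrix_mulVec_eq_one (hy : Function.Injective y) (hxy : ∀ i j, x i ≠ y j) :
    cauchyMatrix x y *ᵥ (fun j => nodalWeight univ y j * -(nodal univ x).eval (y j)) = 1 := by
  have hdeg : (nodal univ y - nodal univ x).degree < #(univ : Finset ι) := by
    rw [← degree_nodal (v := y)]
    exact degree_sub_lt_left (by rw [degree_nodal, degree_nodal]) nodal_ne_zero
      (by rw [nodal_monic.leadingCoeff, nodal_monic.leadingCoeff])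
  have hvals : (fun j => -(nodal univ x).eval (y j)) =
      fun j => (nodal univ y - nodal univ x).eval (y j) := by
    ext j
    rw [eval_sub, eval_nodal_at_node (mem_univ j), zero_sub]
  ext i
  rw [cauchyMatrix_mulVec_nodalWeight_mul hxy, hvals, ← eq_interpolate hy.injOn hdeg, eval_sub,
    eval_nodal_at_node (mem_univ i), sub_zero, div_self (eval_nodal_not_at_node fun j _ => hxy i j),
    Pi.one_apply]

theorem cauchyMatrix_inv_mulVec_one (hx : Function.Injective x) (hy : Function.Injective y)
    (hxy : ∀ i j, x i ≠ y j) (m : ι) :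
    ((cauchyMatrix x y)⁻¹ *ᵥ 1) m =
      (x m - y m) * ∏ n ∈ univ.erase m, (y m - x n) / (y m - y n) := by
  have hunit : IsUnit (cauchyMatrix x y).det :=
    (isUnit_iff_isUnit_det _).mp (mulVec_injective_iff_isUnit.mp
      (cauchyMatrix_mulVec_injective hx hy hxy))
  rw [← cauchyMatrix_mulVec_eq_one hy hxy, mulVec_mulVec, nonsing_inv_mul _ hunit, one_mulVec,
    eval_nodal, ← mul_prod_erase univ (fun n => y m - x n) (mem_univ m), nodalWeight,
    prod_inv_distrib, prod_div_distrib]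
  ring

end CauchyMatrix

theorem Complex.exp_ne_exp_neg {z : ℂ} (hz : z.im ∈ Set.Ioo (-Real.pi) 0 ∪ Set.Ioo 0 Real.pi) :
    exp z ≠ exp (-z) := by
  rw [Ne, exp_eq_exp_iff_exists_int]
  rintro ⟨k, hk⟩
  have him : z.im = k * Real.pi := by
    have h : z.im = -z.im + k * (2 * Real.pi) := by simpa using congrArg im hk
    linarith
  rcases hz with ⟨hlo, hhi⟩ | ⟨hlo, hhi⟩ <;> rw [him] at hlo hhi
  · have : (-1 : ℝ) < k ∧ (k : ℝ) < 0 := ⟨by nlinarith [Real.pi_pos], by nlinarith [Real.pi_pos]⟩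
    norm_cast at this
    omega
  · have : (0 : ℝ) < k ∧ (k : ℝ) < 1 := ⟨by nlinarith [Real.pi_pos], by nlinarith [Real.pi_pos]⟩
    norm_cast at this
    omega

theorem cauchy_inverse_apply_one (N : ℕ) (r : Fin N → ℂ)
    (him : ∀ n, (r n).im ∈ Set.Ioo (-Real.pi) 0 ∪ Set.Ioo 0 Real.pi)
    (hr : ∀ m n, m ≠ n → exp (r m) ≠ exp (r n) ∧ exp (r m) ≠ exp (-r n))
    (C : Matrix (Fin N) (Fin N) ℂ)
    (hC : ∀ m n, C m n = 1 / (exp (r m) - exp (-r n))) :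
    ∀ m, (C⁻¹ *ᵥ fun _ => (1 : ℂ)) m =
      (exp (r m) - exp (-r m)) *
        ∏ n ∈ Finset.univ.erase m,
          (exp (-r m) - exp (r n)) / (exp (-r m) - exp (-r n)) := by
  have hx : Function.Injective fun n => exp (r n) := fun m n h => by
    by_contra hmn
    exact (hr m n hmn).1 h
  have hy : Function.Injective fun n => exp (-r n) := fun m n h => by
    simp only [exp_neg, _root_.inv_inj] at h
    exact hx h
  have hxy (m n : Fin N) : exp (r m) ≠ exp (-r n) := by
    rcases eq_or_ne m n with rfl | hmn
    · exact exp_ne_exp_neg (him m)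
    · exact (hr m n hmn).2
  have hCeq : C = cauchyMatrix (fun n => exp (r n)) fun n => exp (-r n) := by
    ext m n
    rw [hC, one_div]
    rfl
  subst hCeq
  exact cauchyMatrix_inv_mulVec_one hx hy hxy
end

section
/- With C(r) the Cauchy matrix with entries 1/(e^{r_m} - e^{-r_n}) and ζ = (1,...,1)^t, one has ∑_{m=1}^N (C(r)^{-1}ζ)_m = ∑_{m=1}^N (e^{r_m} - e^{-r_m}). -/
open Finset Complex Matrix Polynomial

theorem cauchy_inverse_sum (N : ℕ) (r : Fin N → ℂ)
    (him : ∀ n, (r n).im ∈ Set.Ioo (-Real.pi) 0 ∪ Set.Ioo 0 Real.pi)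
    (hr : ∀ m n, m ≠ n → exp (r m) ≠ exp (r n) ∧ exp (r m) ≠ exp (-r n))
    (C : Matrix (Fin N) (Fin N) ℂ)
    (hC : ∀ m n, C m n = 1 / (exp (r m) - exp (-r n))) :
    ∑ m, (C⁻¹ *ᵥ fun _ => (1 : ℂ)) m = ∑ m, (exp (r m) - exp (-r m)) := by
  rcases Nat.eq_zero_or_pos N with hN | hN
  · subst hN; simp
  set x : Fin N → ℂ := fun m => exp (r m) with hxdef
  set y : Fin N → ℂ := fun n => exp (-r n) with hydef
  have hcard : (univ : Finset (Fin N)).card = N := by simp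
  -- x m ≠ y n for all m n
  have hxy : ∀ m n, x m ≠ y n := by
    intro m n h
    rcases eq_or_ne m n with rfl | hmn
    · have h' : exp (r m) = exp (-r m) := h
      have h1 : exp (r m + r m) = 1 := by
        rw [Complex.exp_add]
        nth_rewrite 1 [h']
        rw [← Complex.exp_add]; simp
      obtain ⟨k, hk⟩ := Complex.exp_eq_one_iff.mp h1
      have him' := him m
      have hkim : (r m).im + (r m).im = k * (2 * Real.pi) := by
        have := congrArg Complex.im hk
        simpa [Complex.add_im, Complex.mul_im, Complex.mul_re] using this
      have hpi := Real.pi_pos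
      rcases him' with h2 | h2 <;> rcases h2 with ⟨ha, hb⟩ <;>
      · rcases lt_trichotomy k 0 with hk0 | hk0 | hk0
        · have : (k : ℝ) ≤ -1 := by exact_mod_cast (by omega : k ≤ -1)
          nlinarith
        · subst hk0; simp at hkim; nlinarith
        · have : (1 : ℝ) ≤ (k : ℝ) := by exact_mod_cast hk0
          nlinarith
    · exact (hr m n hmn).2 h
  have hsub : ∀ m n, x m - y n ≠ 0 := fun m n => sub_ne_zero_of_ne (hxy m n)
  have hxinj : Set.InjOn x (univ : Finset (Fin N)) := by
    intro m _ n _ h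
    by_contra hmn
    exact (hr m n hmn).1 h
  have hyinj : Set.InjOn y (univ : Finset (Fin N)) := by
    intro m _ n _ h
    by_contra hmn
    apply (hr m n hmn).1
    have : (exp (r m))⁻¹ = (exp (r n))⁻¹ := by
      simpa [hydef, Complex.exp_neg] using h
    exact inv_injective this
  have hC' : ∀ m n, C m n = (x m - y n)⁻¹ := by
    intro m n; rw [hC]; simp [hxdef, hydef, one_div]
  -- invertibility of C
  have hdet : IsUnit C.det := by
    rw [isUnit_iff_ne_zero]
    intro h0
    obtain ⟨v, hv0, hv⟩ := (Matrix.exists_mulVec_eq_zero_iff).mpr h0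
    set P : Polynomial ℂ :=
      ∑ n, Polynomial.C (v n) * Lagrange.nodal (univ.erase n) y with hPdef
    have hPdeg : P.degree < (univ : Finset (Fin N)).card := by
      refine lt_of_le_of_lt (degree_sum_le _ _) ?_
      rw [Finset.sup_lt_iff (by rw [hcard]; exact_mod_cast WithBot.bot_lt_coe N)]
      intro n _
      refine lt_of_le_of_lt (degree_mul_le _ _) ?_
      have h1 : (Lagrange.nodal (univ.erase n) y).degree = ((N - 1 : ℕ) : WithBot ℕ) := by
        rw [Lagrange.degree_nodal, card_erase_of_mem (mem_univ n), hcard]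
      calc (Polynomial.C (v n)).degree + (Lagrange.nodal (univ.erase n) y).degree
          ≤ 0 + ((N - 1 : ℕ) : WithBot ℕ) := add_le_add degree_C_le (le_of_eq h1)
        _ = ((N - 1 : ℕ) : WithBot ℕ) := zero_add _
        _ < (univ : Finset (Fin N)).card := by
            rw [hcard]; exact_mod_cast Nat.sub_lt hN one_pos
    have hPx : ∀ m ∈ (univ : Finset (Fin N)), P.eval (x m) = 0 := by
      intro m _
      have hvm : ∑ n, (x m - y n)⁻¹ * v n = 0 := by
        have := congrFun hv m
        simpa [Matrix.mulVec, dotProduct, hC'] using this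
      have : P.eval (x m) = (∏ k, (x m - y k)) * ∑ n, (x m - y n)⁻¹ * v n := by
        rw [hPdef, eval_finset_sum, Finset.mul_sum]
        refine Finset.sum_congr rfl fun n _ => ?_
        rw [eval_mul, eval_C, Lagrange.eval_nodal]
        rw [← Finset.mul_prod_erase _ _ (mem_univ n)]
        field_simp [hsub m n]
      rw [this, hvm, mul_zero]
    have hP0 : P = 0 :=
      Polynomial.eq_zero_of_degree_lt_of_eval_index_eq_zero _ hxinj hPdeg hPx
    apply hv0
    funext n
    have := congrArg (Polynomial.eval (y n)) hP0
    rw [hPdef, eval_finset_sum, eval_zero] at this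
    rw [Finset.sum_eq_single n] at this
    · rw [eval_mul, eval_C, Lagrange.eval_nodal] at this
      have hprod : ∏ k ∈ univ.erase n, (y n - y k) ≠ 0 := by
        refine Finset.prod_ne_zero_iff.mpr fun k hk => ?_
        exact sub_ne_zero_of_ne fun h =>
          (mem_erase.mp hk).1 (hyinj (mem_univ k) (mem_univ n) h.symm)
      have := mul_eq_zero.mp this
      simpa [hprod] using this
    · intro b _ hbn
      rw [eval_mul, Lagrange.eval_nodal_at_node (mem_erase.mpr ⟨hbn.symm, mem_univ n⟩),
        mul_zero]
    · intro h; exact absurd (mem_univ n) h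
  -- explicit solution u of C *ᵥ u = 1
  set w : Fin N → ℂ := fun n => Lagrange.nodalWeight univ y n with hwdef
  set g : Fin N → ℂ := fun n => -∏ k, (y n - x k) with hgdef
  set u : Fin N → ℂ := fun n => w n * g n with hudef
  set Q : Polynomial ℂ := Lagrange.nodal univ y - Lagrange.nodal univ x with hQdef
  have hQdeg : Q.degree < (univ : Finset (Fin N)).card := by
    have hne : (Lagrange.nodal univ y : Polynomial ℂ) ≠ 0 := Lagrange.nodal_ne_zero
    have := Polynomial.degree_sub_lt (p := Lagrange.nodal univ y) (q := Lagrange.nodal univ x)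
      ((Lagrange.degree_nodal (v := y)).trans (Lagrange.degree_nodal (v := x)).symm) hne
      ((Lagrange.nodal_monic (v := y)).leadingCoeff.trans
        (Lagrange.nodal_monic (v := x)).leadingCoeff.symm)
    rwa [Lagrange.degree_nodal] at this
  have hQ : Q = Lagrange.interpolate univ y (fun n => Q.eval (y n)) :=
    Lagrange.eq_interpolate hyinj hQdeg
  have hQy : ∀ n, Q.eval (y n) = g n := by
    intro n
    rw [hQdef, eval_sub, Lagrange.eval_nodal_at_node (mem_univ n), Lagrange.eval_nodal]
    simp [hgdef]
  -- C *ᵥ u = 1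
  have hCu : C *ᵥ u = fun _ => (1 : ℂ) := by
    funext m
    have hnotnode : ∀ i ∈ (univ : Finset (Fin N)), x m ≠ y i := fun i _ => hxy m i
    have heval := congrArg (Polynomial.eval (x m)) hQ
    rw [Lagrange.eval_interpolate_not_at_node _ hnotnode] at heval
    have hlhs : Q.eval (x m) = ∏ k, (x m - y k) := by
      rw [hQdef, eval_sub, Lagrange.eval_nodal, Lagrange.eval_nodal_at_node (mem_univ m),
        sub_zero]
    have hE : eval (x m) (Lagrange.nodal univ y) = ∏ k, (x m - y k) := Lagrange.eval_nodal
    rw [hlhs, hE] at heval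
    have hEne : (∏ k, (x m - y k)) ≠ 0 := Finset.prod_ne_zero_iff.mpr fun k _ => hsub m k
    have hsum : ∑ n, Lagrange.nodalWeight univ y n * (x m - y n)⁻¹ * Q.eval (y n) = 1 := by
      exact (mul_left_cancel₀ hEne (by rw [mul_one]; exact heval)).symm
    have : (C *ᵥ u) m = ∑ n, Lagrange.nodalWeight univ y n * (x m - y n)⁻¹ * Q.eval (y n) := by
      simp only [Matrix.mulVec, dotProduct, hC', hudef, hwdef, hQy]
      exact Finset.sum_congr rfl fun n _ => by ring
    rw [this, hsum]
  have hkey : (C⁻¹ *ᵥ fun _ => (1 : ℂ)) = u := by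
    rw [← hCu, Matrix.mulVec_mulVec, Matrix.nonsing_inv_mul C hdet, Matrix.one_mulVec]
  -- sum of u via coefficient extraction
  have hsumu : ∑ n, u n = ∑ m, (x m - y m) := by
    have hcoeff := congrArg (fun p => Polynomial.coeff p (N - 1)) hQ
    have hnodalcoeff : ∀ v' : Fin N → ℂ,
        (Lagrange.nodal univ v').coeff (N - 1) = -∑ k, v' k := by
      intro v'
      have h1 : (Lagrange.nodal univ v').natDegree = N := by
        rw [Lagrange.natDegree_nodal, hcard]
      have h2 := Polynomial.nextCoeff_of_natDegree_pos (p := Lagrange.nodal univ v')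
        (by rw [h1]; exact hN)
      rw [h1] at h2
      rw [← h2, Lagrange.nodal_eq, Polynomial.prod_X_sub_C_nextCoeff]
    have hlhs : Q.coeff (N - 1) = ∑ m, (x m - y m) := by
      rw [hQdef, Polynomial.coeff_sub, hnodalcoeff, hnodalcoeff, Finset.sum_sub_distrib]
      ring
    have hbasis : ∀ n, (Lagrange.basis univ y n).coeff (N - 1) = w n := by
      intro n
      have hdeg : (Lagrange.basis univ y n).natDegree = N - 1 := by
        rw [Lagrange.natDegree_basis hyinj (mem_univ n), hcard]
      rw [← hdeg, Polynomial.coeff_natDegree]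
      rw [Lagrange.basis, Polynomial.leadingCoeff_prod]
      rw [hwdef]
      simp only [Lagrange.nodalWeight]
      refine Finset.prod_congr rfl fun j hj => ?_
      rw [Lagrange.basisDivisor, Polynomial.leadingCoeff_mul, Polynomial.leadingCoeff_C,
        (monic_X_sub_C (y j)).leadingCoeff, mul_one]
    have hrhs : (Lagrange.interpolate univ y fun n => Q.eval (y n)).coeff (N - 1)
        = ∑ n, u n := by
      rw [Lagrange.interpolate_apply, Polynomial.finset_sum_coeff]
      refine Finset.sum_congr rfl fun n _ => ?_
      rw [Polynomial.coeff_C_mul, hbasis, hQy, hudef]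
      ring
    rw [hlhs, hrhs] at hcoeff
    exact hcoeff.symm
  rw [hkey, hsumu]
end

section
/- The matrix V(ρ) with entries V(ρ)_{kl} = 1 - ρ_k^l is invertible if and only if ρ_k ≠ 1 for all k and the ρ_k are pairwise distinct. -/
open Finset Matrix

theorem vandermonde_type_invertible_iff (N : ℕ) (ρ : Fin N → ℂ)
    (V : Matrix (Fin N) (Fin N) ℂ)
    (hV : ∀ k l, V k l = 1 - ρ k ^ ((l : ℕ) + 1)) :
    IsUnit V.det ↔ (∀ k, ρ k ≠ 1) ∧ Function.Injective ρ := by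
  set T : Matrix (Fin N) (Fin N) ℂ :=
    Matrix.of (fun i l : Fin N => if (i : ℕ) ≤ (l : ℕ) then (1 : ℂ) else 0) with hT
  have hfact : V = Matrix.diagonal (fun k => 1 - ρ k) * (Matrix.vandermonde ρ * T) := by
    ext k l
    rw [Matrix.diagonal_mul, Matrix.mul_apply]
    simp only [hT, Matrix.vandermonde_apply, Matrix.of_apply, mul_ite, mul_one, mul_zero, hV]
    rw [Fin.sum_univ_eq_sum_range (fun i => if i ≤ (l : ℕ) then ρ k ^ i else 0)]
    rw [← Finset.sum_subset (Finset.range_subset_range.2 (Nat.succ_le_of_lt l.isLt))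
        (fun x _ hx => by
          rw [Finset.mem_range, Nat.lt_succ_iff] at hx
          simp [hx])]
    rw [Finset.sum_ite_of_true (fun x hx => by
          rw [Finset.mem_range, Nat.lt_succ_iff] at hx; exact hx)]
    have h := geom_sum_mul (ρ k) ((l : ℕ) + 1)
    linear_combination h
  have hTdet : T.det = 1 := by
    have htri : T.BlockTriangular id := by
      intro i j hij
      simp only [hT, Matrix.of_apply]
      rw [if_neg]
      exact Nat.not_le.2 (Fin.lt_iff_val_lt_val.mp hij)
    rw [Matrix.det_of_upperTriangular htri]
    simp [hT]
  rw [hfact, Matrix.det_mul, Matrix.det_mul, Matrix.det_diagonal, hTdet, mul_one]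
  rw [isUnit_iff_ne_zero, mul_ne_zero_iff]
  constructor
  · rintro ⟨h1, h2⟩
    refine ⟨fun k hk => ?_, ?_⟩
    · have := Finset.prod_ne_zero_iff.mp h1 k (Finset.mem_univ k)
      apply this; rw [hk]; ring
    · exact Matrix.det_vandermonde_ne_zero_iff.mp h2
  · rintro ⟨h1, h2⟩
    exact ⟨Finset.prod_ne_zero_iff.2 fun k _ => sub_ne_zero.2 fun h => h1 k h.symm,
      Matrix.det_vandermonde_ne_zero_iff.2 h2⟩
end

section
/- Let r ∈ ℂ with e^{2r} ≠ 1, R : ℂ → ℂ, and define c_0(x) = -e^{-r} - R(x), V_a(x) = c_0(x)/c_0(x+i), V_b(x) = c_0(x) - c_0(x-i). If moreover R satisfies the constraint μ(x)e^{-2irx}R(x) + R(x)/(e^r - e^{-r}) = 1 with μ i-periodic, then the function W(x,p) = e^{ixp}(1 - R(x)/(e^p - e^{-r})) satisfies W(x-i,p) + V_a(x)W(x+i,p) + (V_b(x) - e^p - e^{-p})W(x,p) = 0 for all p with e^p ≠ e^{-r}. -/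
/-!
Eliminating the `i`-periodic factor `μ` between the constraint at `y` and at `y + i` (where
`e^{-2iry}` picks up a factor `e^{2r}`) gives, with `t = e^r`, the Riccati-type relation
`t² R(y+i) - R(y) = t R(y) R(y+i)`. Dividing the three-term equation by `e^{ixp}` and writing
`u = e^{-r}`, `q = e^p`, it becomes a rational identity in `t, u, q` and `R(x-i), R(x), R(x+i)`,
which follows from the relation at `x - i` and at `x`. The same relation rules out `c₀(x+i) = 0`.
-/

open Complex

theorem neg_sub_ne_zero_of_shift_relation {K : Type*} [Field K] {t u b c : K} (htu : t * u = 1)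
    (hbc : t ^ 2 * c - b = t * b * c) : -u - c ≠ 0 := by
  intro hc
  obtain rfl : c = -u := by linear_combination -hc
  have ht : t = 0 := by linear_combination -hbc + (b - t) * htu
  simp [ht] at htu

theorem three_term_identity_of_shift_relation {K : Type*} [Field K] {t u q q' a b c : K}
    (htu : t * u = 1) (hqq' : q * q' = 1) (hqu : q - u ≠ 0)
    (hab : t ^ 2 * b - a = t * a * b) (hbc : t ^ 2 * c - b = t * b * c) :
    q * (1 - a / (q - u)) + (-u - b) / (-u - c) * (q' * (1 - c / (q - u)))
      + ((-u - b) - (-u - a) - q - q') * (1 - b / (q - u)) = 0 := by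
  have hc := neg_sub_ne_zero_of_shift_relation htu hbc
  field_simp
  linear_combination (u ^ 2 * (1 + t * b)) * hbc - (u ^ 2 * (1 + t * c)) * hab
    + (u ^ 2 * (a - b) * (t * u + 1 + t * b + t * c)
        - ((a - b) * (u + b) * (u + c) + q * q' * (c - b)) * (1 + u * t)) * htu
    + (u ^ 2 * t ^ 2 * (c - b)) * hqq'

theorem shift_relation_of_constraint {r : ℂ} (hr : exp (2 * r) ≠ 1) {μ R : ℂ → ℂ}
    (hper : ∀ x, μ (x + I) = μ x)
    (hcon : ∀ x, μ x * exp (-2 * I * r * x) * R x + R x / (exp r - exp (-r)) = 1) (y : ℂ) :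
    exp r ^ 2 * R (y + I) - R y = exp r * R y * R (y + I) := by
  have htu : exp r * exp (-r) = 1 := by rw [← exp_add, add_neg_cancel, exp_zero]
  have hs : exp r - exp (-r) ≠ 0 := by
    contrapose! hr
    rw [two_mul, exp_add]
    linear_combination exp r * hr + htu
  have hshift : exp (-2 * I * r * (y + I)) = exp (-2 * I * r * y) * exp r ^ 2 := by
    rw [← exp_nat_mul, ← exp_add]
    congr 1
    linear_combination (-2 * r) * I_mul_I
  have hy := hcon y
  have hyI := hcon (y + I)
  rw [hper, hshift] at hyI
  field_simp at hy hyI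
  refine mul_left_cancel₀ hs ?_
  linear_combination R y * hyI - exp r ^ 2 * R (y + I) * hy + R y * R (y + I) * htu

theorem N1_eigenfunction_general (r : ℂ) (hr : exp (2 * r) ≠ 1)
    (μ R : ℂ → ℂ) (hper : ∀ x, μ (x + I) = μ x)
    (hcon : ∀ x, μ x * exp (-2 * I * r * x) * R x
      + R x / (exp r - exp (-r)) = 1)
    (c₀ Va Vb : ℂ → ℂ)
    (hc₀ : ∀ x, c₀ x = -exp (-r) - R x)
    (hVa : ∀ x, Va x = c₀ x / c₀ (x + I))
    (hVb : ∀ x, Vb x = c₀ x - c₀ (x - I))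
    (W : ℂ → ℂ → ℂ)
    (hW : ∀ x p, W x p = exp (I * x * p) * (1 - R x / (exp p - exp (-r)))) :
    ∀ x p, exp p ≠ exp (-r) →
      W (x - I) p + Va x * W (x + I) p + (Vb x - exp p - exp (-p)) * W x p = 0 := by
  intro x p hp
  have hrel := shift_relation_of_constraint hr hper hcon
  have hab := hrel (x - I)
  rw [sub_add_cancel] at hab
  have hexp_mul_neg (z : ℂ) : exp z * exp (-z) = 1 := by rw [← exp_add, add_neg_cancel, exp_zero]
  have hexp_sub : exp (I * (x - I) * p) = exp (I * x * p) * exp p := by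
    rw [← exp_add]; congr 1; linear_combination (-p) * I_mul_I
  have hexp_add : exp (I * (x + I) * p) = exp (I * x * p) * exp (-p) := by
    rw [← exp_add]; congr 1; linear_combination p * I_mul_I
  rw [hW, hW, hW, hVa, hVb, hc₀, hc₀, hc₀, hexp_sub, hexp_add]
  linear_combination exp (I * x * p) *
    three_term_identity_of_shift_relation (hexp_mul_neg r) (hexp_mul_neg p)
      (sub_ne_zero.mpr hp) hab (hrel x)

theorem N1_eigenfunction (r : ℂ) (hr : exp (2 * r) ≠ 1)
    (μ R : ℂ → ℂ) (hper : ∀ x, μ (x + I) = μ x)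
    (hcon : ∀ x, μ x * exp (-2 * I * r * x) * R x
      + R x / (exp r - exp (-r)) = 1)
    (c₀ Va Vb : ℂ → ℂ)
    (hc₀ : ∀ x, c₀ x = -exp (-r) - R x)
    (hc₀nz : ∀ x, c₀ x ≠ 0)
    (hVa : ∀ x, Va x = c₀ x / c₀ (x + I))
    (hVb : ∀ x, Vb x = c₀ x - c₀ (x - I))
    (W : ℂ → ℂ → ℂ)
    (hW : ∀ x p, W x p = exp (I * x * p) * (1 - R x / (exp p - exp (-r)))) :
    ∀ x p, exp p ≠ exp (-r) →
      W (x - I) p + Va x * W (x + I) p + (Vb x - exp p - exp (-p)) * W x p = 0 :=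
  N1_eigenfunction_general r hr μ R hper hcon c₀ Va Vb hc₀ hVa hVb W hW
end

section
/- Let r_1,...,r_N ∈ ℂ and define a(p) = ∏_{n=1}^N (e^p - e^{r_n})/(e^p - e^{-r_n}) and ζ = (1,...,1)^t. Under the standing assumptions (Im r_n ∈ (-π,0)∪(0,π), e^{r_m} ≠ e^{±r_n} for m ≠ n) one has the partial fraction identity a(p) = 1 - ∑_{n=1}^N (C(r)^{-1}ζ)_n/(e^p - e^{-r_n}) for all p with e^p ∉ {e^{-r_1},...,e^{-r_N}}, where C(r)_{mn} = 1/(e^{r_m} - e^{-r_n}). -/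
open Complex Finset Matrix Polynomial

private lemma degree_sum_lt {N : ℕ} (y : Fin N → ℂ) (c : Fin N → ℂ) :
    (∑ n, Polynomial.C (c n) *
      ∏ m ∈ Finset.univ.erase n, (Polynomial.X - Polynomial.C (y m))).degree < N := by
  refine lt_of_le_of_lt (Polynomial.degree_sum_le _ _) ?_
  rw [Finset.sup_lt_iff (by exact_mod_cast WithBot.bot_lt_coe N)]
  intro n _
  refine lt_of_le_of_lt (Polynomial.degree_mul_le _ _) ?_
  refine lt_of_le_of_lt (add_le_add Polynomial.degree_C_le (Polynomial.degree_prod_le _ _)) ?_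
  have h1 : ∑ m ∈ Finset.univ.erase n, (Polynomial.X - Polynomial.C (y m)).degree
      = ((N - 1 : ℕ) : WithBot ℕ) := by
    rw [Finset.sum_congr rfl (fun m _ => Polynomial.degree_X_sub_C (y m))]
    simp [Finset.card_erase_of_mem]
  rw [h1, zero_add]
  exact_mod_cast Nat.sub_lt (Fin.pos n) one_pos

private lemma sum_eval_at_node {N : ℕ} (y : Fin N → ℂ) (c : Fin N → ℂ) (k : Fin N) :
    ∑ n, c n * ∏ m ∈ Finset.univ.erase n, (y k - y m) =
      c k * ∏ m ∈ Finset.univ.erase k, (y k - y m) := by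
  refine Finset.sum_eq_single k (fun n _ hn => ?_) (by simp)
  exact mul_eq_zero_of_right _
    (Finset.prod_eq_zero (Finset.mem_erase.2 ⟨Ne.symm hn, Finset.mem_univ k⟩) (sub_self _))

private lemma erase_prod_ne_zero {N : ℕ} {y : Fin N → ℂ} (hy : Function.Injective y) (n : Fin N) :
    (∏ m ∈ Finset.univ.erase n, (y n - y m)) ≠ 0 :=
  Finset.prod_ne_zero_iff.2 fun m hm =>
    sub_ne_zero.2 fun h => Finset.ne_of_mem_erase hm ((hy h).symm)

private lemma key_identity_s13 {N : ℕ} (x y : Fin N → ℂ) (hy : Function.Injective y) :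
    ∃ c : Fin N → ℂ, ∀ z : ℂ, (∀ n, z ≠ y n) →
      ∏ n, (z - x n) / (z - y n) = 1 - ∑ n, c n / (z - y n) := by
  classical
  set c : Fin N → ℂ := fun n =>
    -(∏ m, (y n - x m)) / ∏ m ∈ Finset.univ.erase n, (y n - y m) with hc
  refine ⟨c, fun z hz => ?_⟩
  have hpoly : (∏ n, (Polynomial.X - Polynomial.C (x n))) =
      (∏ n, (Polynomial.X - Polynomial.C (y n))) -
        ∑ n, Polynomial.C (c n) * ∏ m ∈ Finset.univ.erase n,
          (Polynomial.X - Polynomial.C (y m)) := by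
    rcases Nat.eq_zero_or_pos N with h0 | hpos
    · subst h0; simp
    apply Polynomial.eq_of_degree_sub_lt_of_eval_index_eq (v := y) Finset.univ hy.injOn
    · have hP : (∏ n, (Polynomial.X - Polynomial.C (x n))).degree = (N : WithBot ℕ) := by
        rw [Polynomial.degree_prod]
        rw [Finset.sum_congr rfl (fun m _ => Polynomial.degree_X_sub_C (x m))]
        simp
      have hQ : (∏ n, (Polynomial.X - Polynomial.C (y n))).degree = (N : WithBot ℕ) := by
        rw [Polynomial.degree_prod]
        rw [Finset.sum_congr rfl (fun m _ => Polynomial.degree_X_sub_C (y m))]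
        simp
      have hPQ : ((∏ n, (Polynomial.X - Polynomial.C (x n))) -
          (∏ n, (Polynomial.X - Polynomial.C (y n)))).degree < (N : WithBot ℕ) := by
        rw [← hP]
        refine Polynomial.degree_sub_lt (hP.trans hQ.symm) ?_ ?_
        · exact (Polynomial.monic_prod_of_monic _ _
            fun m _ => Polynomial.monic_X_sub_C (x m)).ne_zero
        · rw [(Polynomial.monic_prod_of_monic _ _
              fun m _ => Polynomial.monic_X_sub_C (x m)).leadingCoeff,
            (Polynomial.monic_prod_of_monic _ _
              fun m _ => Polynomial.monic_X_sub_C (y m)).leadingCoeff]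
      have hrw : (∏ n, (Polynomial.X - Polynomial.C (x n))) -
          ((∏ n, (Polynomial.X - Polynomial.C (y n))) -
            ∑ n, Polynomial.C (c n) * ∏ m ∈ Finset.univ.erase n,
              (Polynomial.X - Polynomial.C (y m)))
          = ((∏ n, (Polynomial.X - Polynomial.C (x n))) -
              (∏ n, (Polynomial.X - Polynomial.C (y n)))) +
            ∑ n, Polynomial.C (c n) * ∏ m ∈ Finset.univ.erase n,
              (Polynomial.X - Polynomial.C (y m)) := by ring
      rw [hrw]
      have := lt_of_le_of_lt (Polynomial.degree_add_le _ _)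
        (max_lt hPQ (degree_sum_lt y c))
      simpa using this
    · intro k _
      have hL : Polynomial.eval (y k)
          ((∏ n, (Polynomial.X - Polynomial.C (y n))) -
            ∑ n, Polynomial.C (c n) * ∏ m ∈ Finset.univ.erase n,
              (Polynomial.X - Polynomial.C (y m)))
          = - (c k * ∏ m ∈ Finset.univ.erase k, (y k - y m)) := by
        rw [Polynomial.eval_sub, Polynomial.eval_prod]
        have h0 : ∏ n, (y k - y n) = 0 :=
          Finset.prod_eq_zero (Finset.mem_univ k) (sub_self _)
        simp only [Polynomial.eval_sub, Polynomial.eval_X, Polynomial.eval_C, h0,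
          Polynomial.eval_finset_sum, Polynomial.eval_mul, Polynomial.eval_prod]
        rw [sum_eval_at_node y c k]
        ring
      rw [hL, Polynomial.eval_prod]
      simp only [Polynomial.eval_sub, Polynomial.eval_X, Polynomial.eval_C]
      rw [hc]
      field_simp [erase_prod_ne_zero hy k]
  -- evaluate at z
  have hev := congrArg (Polynomial.eval z) hpoly
  simp only [Polynomial.eval_sub, Polynomial.eval_prod, Polynomial.eval_finset_sum,
    Polynomial.eval_mul, Polynomial.eval_X, Polynomial.eval_C] at hev
  have hzn : ∀ n, z - y n ≠ 0 := fun n => sub_ne_zero.2 (hz n)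
  have hD : (∏ n, (z - y n)) ≠ 0 := Finset.prod_ne_zero_iff.2 fun n _ => hzn n
  rw [Finset.prod_div_distrib, hev, sub_div, div_self hD, Finset.sum_div]
  congr 1
  refine Finset.sum_congr rfl fun n _ => ?_
  rw [← Finset.mul_prod_erase Finset.univ _ (Finset.mem_univ n)]
  have hE : (∏ m ∈ Finset.univ.erase n, (z - y m)) ≠ 0 :=
    Finset.prod_ne_zero_iff.2 fun m _ => hzn m
  exact mul_div_mul_right _ _ hE

private lemma cauchy_ker {N : ℕ} (x y : Fin N → ℂ) (hx : Function.Injective x)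
    (hy : Function.Injective y) (hxy : ∀ m n, x m ≠ y n) (v : Fin N → ℂ)
    (hv : ∀ m, ∑ n, v n / (x m - y n) = 0) : v = 0 := by
  classical
  have hS : (∑ n, Polynomial.C (v n) * ∏ m ∈ Finset.univ.erase n,
      (Polynomial.X - Polynomial.C (y m))) = 0 := by
    apply Polynomial.eq_zero_of_degree_lt_of_eval_index_eq_zero (v := x) Finset.univ hx.injOn
    · simpa using degree_sum_lt y v
    · intro k _
      simp only [Polynomial.eval_finset_sum, Polynomial.eval_mul, Polynomial.eval_C,
        Polynomial.eval_prod, Polynomial.eval_sub, Polynomial.eval_X]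
      have hterm : ∀ n : Fin N, v n * ∏ m ∈ Finset.univ.erase n, (x k - y m)
          = (v n / (x k - y n)) * ∏ m, (x k - y m) := by
        intro n
        rw [← Finset.mul_prod_erase Finset.univ _ (Finset.mem_univ n),
          div_mul_eq_mul_div, mul_comm (x k - y n), ← mul_assoc,
          mul_div_assoc, div_self (sub_ne_zero.2 (hxy k n)), mul_one]
      rw [Finset.sum_congr rfl fun n _ => hterm n, ← Finset.sum_mul, hv k, zero_mul]
  funext j
  have := congrArg (Polynomial.eval (y j)) hS
  simp only [Polynomial.eval_finset_sum, Polynomial.eval_mul, Polynomial.eval_C,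
    Polynomial.eval_prod, Polynomial.eval_sub, Polynomial.eval_X, Polynomial.eval_zero] at this
  rw [sum_eval_at_node y v j] at this
  have := (mul_eq_zero.1 this).resolve_right (erase_prod_ne_zero hy j)
  simpa using this

theorem transmission_partial_fractions (N : ℕ) (r : Fin N → ℂ)
    (him : ∀ n, (r n).im ∈ Set.Ioo (-Real.pi) 0 ∪ Set.Ioo 0 Real.pi)
    (hr : ∀ m n, m ≠ n → exp (r m) ≠ exp (r n) ∧ exp (r m) ≠ exp (-r n))
    (C : Matrix (Fin N) (Fin N) ℂ)
    (hC : ∀ m n, C m n = 1 / (exp (r m) - exp (-r n))) :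
    ∀ p : ℂ, (∀ n, exp p ≠ exp (-r n)) →
      ∏ n, (exp p - exp (r n)) / (exp p - exp (-r n)) =
        1 - ∑ n, (C⁻¹ *ᵥ fun _ => (1 : ℂ)) n / (exp p - exp (-r n)) := by
  have hπ := Real.pi_pos
  -- no n has exp (r n) = exp (-r n)
  have hself : ∀ n, exp (r n) ≠ exp (-r n) := by
    intro n h
    obtain ⟨k, hk⟩ := exp_eq_exp_iff_exists_int.1 h
    have hrn : r n = (k : ℂ) * Real.pi * I := by
      linear_combination hk / 2
    have him' : (r n).im = (k : ℝ) * Real.pi := by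
      rw [hrn]; simp
    have hbnd : -Real.pi < (k : ℝ) * Real.pi ∧ (k : ℝ) * Real.pi < Real.pi ∧
        (k : ℝ) * Real.pi ≠ 0 := by
      rcases him n with ⟨h1, h2⟩ | ⟨h1, h2⟩ <;>
        refine ⟨by rw [← him']; linarith, by rw [← him']; linarith, by rw [← him']; linarith⟩
    rcases hbnd with ⟨h1, h2, h3⟩
    have hk0 : k ≠ 0 := by rintro rfl; simp at h3
    have : (1 : ℝ) ≤ |(k : ℝ)| := by exact_mod_cast Int.one_le_abs hk0
    rcases le_or_gt 0 ((k : ℝ)) with hk1 | hk1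
    · have h4 : (1 : ℝ) ≤ (k : ℝ) := by rwa [_root_.abs_of_nonneg hk1] at this
      nlinarith
    · have h4 : (k : ℝ) ≤ -1 := by rw [_root_.abs_of_neg hk1] at this; linarith
      nlinarith
  have hx : Function.Injective fun n => exp (r n) := by
    intro m n h
    by_contra hmn
    exact (hr m n hmn).1 h
  have hy : Function.Injective fun n => exp (-r n) := by
    intro m n h
    simp only [Complex.exp_neg] at h
    exact hx (_root_.inv_inj.1 h)
  have hxy : ∀ m n : Fin N, exp (r m) ≠ exp (-r n) := by
    intro m n
    rcases eq_or_ne m n with rfl | hmn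
    · exact hself m
    · exact (hr m n hmn).2
  obtain ⟨c, hcid⟩ := key_identity_s13 (fun n => exp (r n)) (fun n => exp (-r n)) hy
  -- entries of C *ᵥ w
  have hmv : ∀ w : Fin N → ℂ, ∀ m, (C *ᵥ w) m = ∑ n, w n / (exp (r m) - exp (-r n)) := by
    intro w m
    simp [Matrix.mulVec, dotProduct, hC, inv_mul_eq_div]
  -- C is invertible
  have hdet : C.det ≠ 0 := by
    intro h
    obtain ⟨v, hv0, hv⟩ := (Matrix.exists_mulVec_eq_zero_iff).2 h
    refine hv0 (cauchy_ker (fun n => exp (r n)) (fun n => exp (-r n)) hx hy hxy v ?_)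
    intro m
    rw [← hmv v m, hv]
    rfl
  -- C *ᵥ c = 1
  have hCc : C *ᵥ c = fun _ => (1 : ℂ) := by
    funext m
    have h := hcid (exp (r m)) (fun n => hxy m n)
    have hzero : ∏ n, (exp (r m) - exp (r n)) / (exp (r m) - exp (-r n)) = 0 :=
      Finset.prod_eq_zero (Finset.mem_univ m) (by simp)
    rw [hzero] at h
    rw [hmv c m]
    linear_combination h
  have hinv : C⁻¹ *ᵥ (fun _ => (1 : ℂ)) = c := by
    rw [← hCc, Matrix.mulVec_mulVec, Matrix.nonsing_inv_mul C (isUnit_iff_ne_zero.2 hdet),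
      Matrix.one_mulVec]
  intro p hp
  rw [hinv]
  exact hcid (exp p) hp
end

section
/- With a(p) = ∏_{n=1}^N (e^p - e^{r_n})/(e^p - e^{-r_n}) and C(r) the Cauchy matrix as above, one has 1 + ∑_{n=1}^N e^{r_n}(C(r)^{-1}ζ)_n = ∏_{n=1}^N e^{2r_n}. -/
open Complex Finset Matrix

/-- Top-coefficient Lagrange identity: for `M+1` distinct nodes and a polynomial of
degree `< M+1`, the weighted sum of values gives the coefficient of `X^M`. -/
lemma keyA {M : ℕ} (t : Fin (M + 1) → ℂ) (ht : Function.Injective t)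
    (P : Polynomial ℂ) (hdeg : P.degree < (M + 1 : ℕ)) :
    ∑ j, P.eval (t j) * ∏ k ∈ univ.erase j, (t j - t k)⁻¹ = P.coeff M := by
  classical
  have hcard : #(univ : Finset (Fin (M + 1))) = M + 1 := by simp
  have hinterp := Lagrange.eq_interpolate (s := (univ : Finset (Fin (M + 1)))) (v := t)
    (f := P) ht.injOn (by rwa [hcard])
  conv_rhs => rw [hinterp]
  rw [Lagrange.interpolate_apply, Polynomial.finset_sum_coeff]
  refine sum_congr rfl fun j _ => ?_
  rw [Polynomial.coeff_C_mul]
  congr 1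
  rw [Lagrange.basis_eq_prod_sub_inv_mul_nodal_div (mem_univ j),
    ← Lagrange.nodal_erase_eq_nodal_div (mem_univ j), Polynomial.coeff_C_mul]
  have hnd : (Lagrange.nodal ((univ : Finset (Fin (M + 1))).erase j) t).natDegree = M := by
    rw [Lagrange.natDegree_nodal, card_erase_of_mem (mem_univ j), hcard]
    omega
  have hc1 : (Lagrange.nodal ((univ : Finset (Fin (M + 1))).erase j) t).coeff M = 1 := by
    have hmc := (Lagrange.nodal_monic (s := (univ : Finset (Fin (M + 1))).erase j)
      (v := t)).coeff_natDegree
    rwa [hnd] at hmc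
  rw [hc1, mul_one, Lagrange.nodalWeight]

lemma prod_erase_succ {M : ℕ} (f : Fin (M + 1) → ℂ) (m : Fin M) :
    ∏ k ∈ (univ : Finset (Fin (M + 1))).erase m.succ, f k
      = f 0 * ∏ k ∈ univ.erase m, f k.succ := by
  classical
  have hset : (univ : Finset (Fin (M + 1))).erase m.succ
      = insert (0 : Fin (M + 1)) ((univ.erase m).image Fin.succ) := by
    ext k
    induction k using Fin.cases with
    | zero => simp [Ne.symm (Fin.succ_ne_zero m)]
    | succ k =>
      simp [Fin.succ_ne_zero, Fin.succ_inj, Ne.symm (Fin.succ_ne_zero k)]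
  rw [hset, prod_insert (by simp [Fin.succ_ne_zero]),
    prod_image (fun a _ b _ h => Fin.succ_injective _ h)]

lemma prod_erase_zero {M : ℕ} (f : Fin (M + 1) → ℂ) :
    ∏ k ∈ (univ : Finset (Fin (M + 1))).erase 0, f k = ∏ k : Fin M, f k.succ := by
  classical
  have hset : (univ : Finset (Fin (M + 1))).erase 0 = univ.image Fin.succ := by
    ext k
    induction k using Fin.cases with
    | zero => simp [Fin.succ_ne_zero]
    | succ k => simp [Fin.succ_ne_zero]
  rw [hset, prod_image (fun a _ b _ h => Fin.succ_injective _ h)]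

/-- Lagrange top-coefficient identity with one node `a` split off. -/
lemma keyB {M : ℕ} (t : Fin M → ℂ) (ht : Function.Injective t) (a : ℂ)
    (ha : ∀ k, a ≠ t k) (P : Polynomial ℂ) (hdeg : P.degree < (M + 1 : ℕ)) :
    P.eval a * ∏ k, (a - t k)⁻¹
      + ∑ m, P.eval (t m) * ((t m - a)⁻¹ * ∏ k ∈ univ.erase m, (t m - t k)⁻¹)
      = P.coeff M := by
  classical
  have htc : Function.Injective (Fin.cons a t : Fin (M + 1) → ℂ) :=
    Fin.cons_injective_iff.mpr ⟨fun ⟨k, hk⟩ => ha k hk.symm, ht⟩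
  have h := keyA (Fin.cons a t) htc P hdeg
  rw [Fin.sum_univ_succ] at h
  have e0 : P.eval ((Fin.cons a t : Fin (M + 1) → ℂ) 0)
      * ∏ k ∈ (univ : Finset (Fin (M + 1))).erase 0,
          ((Fin.cons a t : Fin (M + 1) → ℂ) 0 - (Fin.cons a t : Fin (M + 1) → ℂ) k)⁻¹
      = P.eval a * ∏ k, (a - t k)⁻¹ := by
    rw [Fin.cons_zero, prod_erase_zero]
    try exact congrArg _ (prod_congr rfl fun k _ => by rw [Fin.cons_succ])
  have e1 : ∀ m : Fin M, P.eval ((Fin.cons a t : Fin (M + 1) → ℂ) m.succ)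
      * ∏ k ∈ (univ : Finset (Fin (M + 1))).erase m.succ,
          ((Fin.cons a t : Fin (M + 1) → ℂ) m.succ - (Fin.cons a t : Fin (M + 1) → ℂ) k)⁻¹
      = P.eval (t m) * ((t m - a)⁻¹ * ∏ k ∈ univ.erase m, (t m - t k)⁻¹) := by
    intro m
    rw [Fin.cons_succ, prod_erase_succ]
    try simp only [Fin.cons_zero, Fin.cons_succ]
  rw [e0, Finset.sum_congr rfl (fun m _ => e1 m)] at h
  exact h

/-- Abstract form of the theorem for a Cauchy matrix with nodes `x`, `y`. -/
lemma cauchy_aux {N : ℕ} (x y : Fin N → ℂ) (hx : Function.Injective x)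
    (hy : Function.Injective y) (hxy : ∀ m n, x m ≠ y n) (hy0 : ∀ n, y n ≠ 0)
    (A : Matrix (Fin N) (Fin N) ℂ) (hA : ∀ m n, A m n = 1 / (x m - y n)) :
    1 + ∑ n, (y n)⁻¹ * (A⁻¹ *ᵥ fun _ => (1 : ℂ)) n = ∏ n, x n * (y n)⁻¹ := by
  classical
  rcases Nat.eq_zero_or_pos N with rfl | hN
  · simp
  set P : Polynomial ℂ := Lagrange.nodal univ x with hP
  have hPdeg : P.degree < ((N + 1 : ℕ) : WithBot ℕ) := by
    rw [hP, Lagrange.degree_nodal]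
    exact_mod_cast Nat.cast_lt.mpr (by simp)
  have hPcoeff : P.coeff N = 1 := by
    have hnd : P.natDegree = N := by rw [hP, Lagrange.natDegree_nodal]; simp
    rw [← hnd, ← Polynomial.leadingCoeff, (Lagrange.nodal_monic).leadingCoeff]
  set u : Fin N → ℂ := fun m => -(P.eval (y m)) * ∏ k ∈ univ.erase m, (y m - y k)⁻¹ with hu
  have hAu : A *ᵥ u = fun _ => (1 : ℂ) := by
    funext i
    have hkey := keyB y hy (x i) (fun k => hxy i k) P hPdeg
    have h0 : P.eval (x i) = 0 := by
      rw [hP, Lagrange.eval_nodal]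
      exact prod_eq_zero (mem_univ i) (by simp)
    rw [h0, zero_mul, zero_add, hPcoeff] at hkey
    show ∑ m, A i m * u m = 1
    rw [← hkey]
    refine sum_congr rfl fun m _ => ?_
    rw [hA i m, one_div]
    simp only [hu]
    have hne : (y m - x i)⁻¹ = -(x i - y m)⁻¹ := by
      rw [← neg_sub (x i) (y m), inv_neg]
    rw [hne]
    ring
  have hker : ∀ v : Fin N → ℂ, A *ᵥ v = 0 → v = 0 := by
    intro v hv
    set Q : Polynomial ℂ := ∑ m, Polynomial.C (v m) * Lagrange.nodal (univ.erase m) y with hQ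
    have hQdeg : Q.natDegree < N := by
      have : Q.natDegree ≤ N - 1 := by
        refine Polynomial.natDegree_sum_le_of_forall_le _ _ fun m _ => ?_
        refine (Polynomial.natDegree_mul_le).trans ?_
        rw [Polynomial.natDegree_C, Lagrange.natDegree_nodal, card_erase_of_mem (mem_univ m)]
        simp
      omega
    have heval : ∀ i, Q.eval (x i) = 0 := by
      intro i
      have hvi : ∑ m, (x i - y m)⁻¹ * v m = 0 := by
        have := congrFun hv i
        simpa [Matrix.mulVec, dotProduct, hA, one_div] using this
      have hev : Q.eval (x i) = ∑ m, v m * ∏ k ∈ univ.erase m, (x i - y k) := by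
        rw [hQ, Polynomial.eval_finset_sum]
        exact sum_congr rfl fun m _ => by rw [Polynomial.eval_mul, Polynomial.eval_C,
          Lagrange.eval_nodal]
      have hfac : ∀ m : Fin N, ∏ k ∈ univ.erase m, (x i - y k)
          = (∏ k, (x i - y k)) * (x i - y m)⁻¹ := by
        intro m
        rw [← Finset.mul_prod_erase univ _ (mem_univ m), mul_comm (x i - y m), mul_assoc,
          mul_inv_cancel₀ (sub_ne_zero.mpr (hxy i m)), mul_one]
      rw [hev]
      calc ∑ m, v m * ∏ k ∈ univ.erase m, (x i - y k)
          = (∏ k, (x i - y k)) * ∑ m, (x i - y m)⁻¹ * v m := by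
            rw [mul_sum]
            exact sum_congr rfl fun m _ => by rw [hfac m]; ring
        _ = 0 := by rw [hvi, mul_zero]
    have hQ0 : Q = 0 := Polynomial.eq_zero_of_natDegree_lt_card_of_eval_eq_zero Q hx heval
      (by rwa [Fintype.card_fin])
    funext m
    have hevm : Q.eval (y m) = v m * ∏ k ∈ univ.erase m, (y m - y k) := by
      rw [hQ, Polynomial.eval_finset_sum]
      rw [Finset.sum_eq_single m]
      · rw [Polynomial.eval_mul, Polynomial.eval_C, Lagrange.eval_nodal]
      · intro m' _ hm'
        rw [Polynomial.eval_mul, Polynomial.eval_C, Lagrange.eval_nodal,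
          prod_eq_zero (mem_erase.mpr ⟨Ne.symm hm', mem_univ m⟩) (by simp), mul_zero]
      · intro hm; exact absurd (mem_univ m) hm
    have hprod : ∏ k ∈ univ.erase m, (y m - y k) ≠ 0 :=
      prod_ne_zero_iff.mpr fun k hk =>
        sub_ne_zero.mpr fun h => (mem_erase.mp hk).1 (hy h).symm
    have : v m * ∏ k ∈ univ.erase m, (y m - y k) = 0 := by rw [← hevm, hQ0, Polynomial.eval_zero]
    have := (mul_eq_zero.mp this).resolve_right hprod
    simpa using this
  have hUnit : IsUnit A := by
    rw [← Matrix.mulVec_injective_iff_isUnit]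
    intro a b hab
    have h1 : A *ᵥ (a - b) = 0 := by rw [Matrix.mulVec_sub, hab, sub_self]
    have h2 := hker _ h1
    exact sub_eq_zero.mp (by funext i; exact congrFun h2 i)
  haveI := A.invertibleOfIsUnitDet ((Matrix.isUnit_iff_isUnit_det A).mp hUnit)
  have hAinv : A⁻¹ *ᵥ (fun _ => (1 : ℂ)) = u := Matrix.inv_mulVec_eq_vec hAu.symm
  rw [hAinv]
  have hkey := keyB y hy 0 (fun k => (hy0 k).symm) P hPdeg
  rw [hPcoeff] at hkey
  have h1 : P.eval 0 * ∏ k, ((0 : ℂ) - y k)⁻¹ = ∏ n, x n * (y n)⁻¹ := by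
    rw [hP, Lagrange.eval_nodal, ← prod_mul_distrib]
    refine prod_congr rfl fun k _ => ?_
    rw [zero_sub, zero_sub, inv_neg, neg_mul_neg]
  have h2 : ∑ m, P.eval (y m) * ((y m - 0)⁻¹ * ∏ k ∈ univ.erase m, (y m - y k)⁻¹)
      = -∑ n, (y n)⁻¹ * u n := by
    rw [← Finset.sum_neg_distrib]
    refine sum_congr rfl fun m _ => ?_
    simp only [hu]
    rw [sub_zero]
    ring
  rw [h1, h2] at hkey
  linear_combination -hkey

theorem cauchy_inverse_weighted_sum (N : ℕ) (r : Fin N → ℂ)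
    (him : ∀ n, (r n).im ∈ Set.Ioo (-Real.pi) 0 ∪ Set.Ioo 0 Real.pi)
    (hr : ∀ m n, m ≠ n → exp (r m) ≠ exp (r n) ∧ exp (r m) ≠ exp (-r n))
    (C : Matrix (Fin N) (Fin N) ℂ)
    (hC : ∀ m n, C m n = 1 / (exp (r m) - exp (-r n))) :
    1 + ∑ n, exp (r n) * (C⁻¹ *ᵥ fun _ => (1 : ℂ)) n = ∏ n, exp (2 * r n) := by
  have hx : Function.Injective fun n => exp (r n) := by
    intro m n h
    by_contra hne
    exact (hr m n hne).1 h
  have hy0 : ∀ n, exp (-r n) ≠ 0 := fun n => Complex.exp_ne_zero _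
  have hy : Function.Injective fun n => exp (-r n) := by
    intro m n h
    apply hx
    simp only [Complex.exp_neg] at h
    exact inv_injective h
  have hxy : ∀ m n, exp (r m) ≠ exp (-r n) := by
    intro m n
    rcases eq_or_ne m n with rfl | hne
    · intro h
      rw [Complex.exp_eq_exp_iff_exists_int] at h
      obtain ⟨k, hk⟩ := h
      have him1 : (r m).im = -(r m).im + k * (2 * Real.pi) := by
        have h2 := congrArg Complex.im hk
        simpa [Complex.add_im, Complex.mul_im, Complex.neg_im] using h2
      have himk : (r m).im = k * Real.pi := by linarith
      have habs : |(r m).im| < Real.pi := by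
        rcases him m with ⟨h1, h2⟩ | ⟨h1, h2⟩ <;> rw [abs_lt] <;> constructor <;> linarith
      have hne0 : (r m).im ≠ 0 := by
        rcases him m with ⟨h1, h2⟩ | ⟨h1, h2⟩ <;> intro h0 <;> linarith
      have hk1 : |(k : ℝ)| * Real.pi < Real.pi := by
        rwa [himk, abs_mul, abs_of_pos Real.pi_pos] at habs
      have hk2 : |(k : ℝ)| < 1 := by
        nlinarith [Real.pi_pos, abs_nonneg ((k : ℝ))]
      have hk0 : k = 0 := by
        rw [← Int.cast_abs] at hk2
        have h3 : |k| < 1 := by exact_mod_cast hk2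
        rcases abs_lt.mp h3 with ⟨h4, h5⟩
        omega
      rw [hk0] at himk
      simp at himk
      exact hne0 himk
    · exact (hr m n hne).2
  have h := cauchy_aux (fun n => exp (r n)) (fun n => exp (-r n)) hx hy hxy hy0 C hC
  have hgoal : (1 : ℂ) + ∑ n, exp (r n) * (C⁻¹ *ᵥ fun _ => (1 : ℂ)) n
      = 1 + ∑ n, (exp (-r n))⁻¹ * (C⁻¹ *ᵥ fun _ => (1 : ℂ)) n := by
    congr 1
    refine sum_congr rfl fun n _ => ?_
    rw [Complex.exp_neg, inv_inv]
  rw [hgoal]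
  refine h.trans (prod_congr rfl fun n _ => ?_)
  show exp (r n) * (exp (-r n))⁻¹ = exp (2 * r n)
  rw [Complex.exp_neg, inv_inv, ← Complex.exp_add, two_mul]
end

section
/- Define the involution on data by r*_n = r_n - iπ if Im r_n ∈ (0,π) and r*_n = r_n + iπ if Im r_n ∈ (-π,0), and μ*_n = -μ_n. Then the diagonal matrix D and Cauchy matrix C satisfy D(r*,μ*;x) = -D(r,μ;x) and C(r*) = -C(r); consequently the unique solution R of (D+C)R = ζ satisfies R(r*,μ*;x) = -R(r,μ;x). -/
open Complex Matrix

theorem involution_relations (N : ℕ) (r : Fin N → ℂ) (μ : Fin N → ℂ → ℂ) (x : ℂ)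
    (him : ∀ n, (r n).im ∈ Set.Ioo (-Real.pi) 0 ∪ Set.Ioo 0 Real.pi)
    (hr : ∀ m n, m ≠ n → exp (r m) ≠ exp (r n) ∧ exp (r m) ≠ exp (-r n))
    (hper : ∀ n y, μ n (y + I) = μ n y)
    (d : ℂ → (ℂ → ℂ) → ℂ → ℂ)
    (hd : ∀ ρ ν y, d ρ ν y = if 0 < ρ.im then ν y * exp (-2 * I * ρ * y)
      else ν y * exp (-2 * I * (ρ + Real.pi * I) * y))
    (rs : Fin N → ℂ)
    (hrs : ∀ n, rs n = if 0 < (r n).im then r n - Real.pi * I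
      else r n + Real.pi * I)
    (μs : Fin N → ℂ → ℂ) (hμs : ∀ n, μs n = -(μ n))
    (C Cs D Ds : Matrix (Fin N) (Fin N) ℂ)
    (hC : ∀ m n, C m n = 1 / (exp (r m) - exp (-r n)))
    (hCs : ∀ m n, Cs m n = 1 / (exp (rs m) - exp (-rs n)))
    (hD : D = Matrix.diagonal fun n => d (r n) (μ n) x)
    (hDs : Ds = Matrix.diagonal fun n => d (rs n) (μs n) x)
    (hInv : IsUnit (D + C).det)
    (R Rs : Fin N → ℂ)
    (hR : (D + C) *ᵥ R = fun _ => 1)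
    (hRs : (Ds + Cs) *ᵥ Rs = fun _ => 1) :
    Ds = -D ∧ Cs = -C ∧ Rs = -R := by
  have hneg : Complex.exp (-(↑Real.pi * I)) = -1 := by
    rw [Complex.exp_neg, Complex.exp_pi_mul_I]
    norm_num
  have hexp : ∀ n, exp (rs n) = -exp (r n) := by
    intro n
    rw [hrs n]
    split_ifs with h
    · rw [sub_eq_add_neg, Complex.exp_add, hneg]; ring
    · rw [Complex.exp_add, Complex.exp_pi_mul_I]; ring
  have hexpn : ∀ n, exp (-rs n) = -exp (-r n) := by
    intro n
    rw [hrs n]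
    split_ifs with h
    · rw [show -(r n - ↑Real.pi * I) = -r n + ↑Real.pi * I by ring,
        Complex.exp_add, Complex.exp_pi_mul_I]; ring
    · rw [show -(r n + ↑Real.pi * I) = -r n + -(↑Real.pi * I) by ring,
        Complex.exp_add, hneg]; ring
  have hCsC : Cs = -C := by
    ext m n
    rw [hCs m n, Matrix.neg_apply, hC m n, hexp, hexpn,
      show -exp (r m) - -exp (-r n) = -(exp (r m) - exp (-r n)) by ring, div_neg]
  have hDsD : Ds = -D := by
    have key : ∀ n, d (rs n) (μs n) x = -(d (r n) (μ n) x) := by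
      intro n
      rw [hd, hd, hμs n]
      rcases him n with h | h
      · have h1 : ¬ 0 < (r n).im := not_lt.mpr (le_of_lt h.2)
        have h2 : 0 < (rs n).im := by
          rw [hrs n, if_neg h1]
          simp only [Complex.add_im, Complex.mul_im, Complex.I_im, Complex.ofReal_re,
            Complex.I_re, Complex.ofReal_im]
          nlinarith [h.1, Real.pi_pos]
        rw [if_pos h2, if_neg h1, hrs n, if_neg h1]
        simp only [Pi.neg_apply]; ring
      · have h1 : 0 < (r n).im := h.1
        have h2 : ¬ 0 < (rs n).im := by
          rw [hrs n, if_pos h1]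
          simp only [Complex.sub_im, Complex.mul_im, Complex.I_im, Complex.ofReal_re,
            Complex.I_re, Complex.ofReal_im, not_lt]
          nlinarith [h.2, Real.pi_pos]
        rw [if_neg h2, if_pos h1, hrs n, if_pos h1,
          show r n - ↑Real.pi * I + ↑Real.pi * I = r n by ring]
        simp only [Pi.neg_apply]; ring
    rw [hDs, hD]
    ext i j
    rcases eq_or_ne i j with rfl | hij
    · simp [Matrix.diagonal_apply_eq, key]
    · simp [Matrix.diagonal_apply_ne _ hij]
  refine ⟨hDsD, hCsC, ?_⟩
  have hA : Ds + Cs = -(D + C) := by rw [hDsD, hCsC]; abel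
  rw [hA, Matrix.neg_mulVec] at hRs
  have h1 : (D + C) *ᵥ (-Rs) = (D + C) *ᵥ R := by
    rw [Matrix.mulVec_neg, hRs, hR]
  have hinj := Matrix.mulVec_injective_iff_isUnit.mpr
    ((Matrix.isUnit_iff_isUnit_det _).mpr hInv)
  have h2 := hinj h1
  rw [← h2]; simp
end
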